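/- arXiv:1604.05135 — 2 statements merged into one kernel-verified Lean document; each statement's English description precedes it below -/
import Mathlib

section
/- Let T be a finite graph with no isolated vertices, A, B, C finite graphs with graph homomorphisms f : A → B, g : A → C, and D_n the double mapping cylinder of height n. Set X = V(B) − f(V(A)), Y = f(V(A)) (identified with V(A) × {n} in D_n), and Z = V(A) × {n−1}. If η is a cell of the Hom complex Hom(T, D_n) such that η(t) ∩ (X ∪ Y) ≠ ∅ for every vertex t of T, then the image of η is contained in X ∪ Y ∪ Z, i.e., Im(η) ⊆ V(B) ∪ (V(A) × {n−1}). -/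
/-- A graph (possibly with loops) on vertex type `V`. -/
structure LoopGraph (V : Type) where
  Adj : V → V → Prop
  symm : ∀ {x y}, Adj x y → Adj y x

/-- A graph homomorphism. -/
structure GHom {V W : Type} (G : LoopGraph V) (H : LoopGraph W) where
  toFun : V → W
  map_adj : ∀ {x y}, G.Adj x y → H.Adj (toFun x) (toFun y)

/-- The complete graph `K_k` as a `Graph`. -/
def completeG (k : ℕ) : LoopGraph (Fin k) :=
  ⟨fun i j => i ≠ j, fun h => Ne.symm h⟩

/-- `Colorable G k` iff there is a homomorphism `G → K_k`. -/
def LoopGraph.Colorable {V : Type} (G : LoopGraph V) (k : ℕ) : Prop :=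
  Nonempty (GHom G (completeG k))

/-- The chromatic number: least `k` admitting a proper colouring. -/
noncomputable def chromNum {V : Type} (G : LoopGraph V) : ℕ :=
  sInf {k | G.Colorable k}

/-- The categorical product `A × I_n`, where `I_n` is the looped path on `{0, …, n}`. -/
def LoopGraph.prodIn {V : Type} (A : LoopGraph V) (n : ℕ) : LoopGraph (V × Fin (n + 1)) :=
  ⟨fun p q => A.Adj p.1 q.1 ∧ |(p.2 : ℤ) - (q.2 : ℤ)| ≤ 1, by
    rintro ⟨a, i⟩ ⟨b, j⟩ ⟨h1, h2⟩
    exact ⟨A.symm h1, by rwa [abs_sub_comm]⟩⟩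

section Cyl
variable {VA VB VC : Type}

/-- Generating relation for the double mapping cylinder: `f a ∼ (a, n)` and `g a ∼ (a, 0)`. -/
def cylRel (f : VA → VB) (g : VA → VC) (n : ℕ) :
    (VB ⊕ (VA × Fin (n + 1)) ⊕ VC) → (VB ⊕ (VA × Fin (n + 1)) ⊕ VC) → Prop :=
  fun x y =>
    (∃ a, x = Sum.inl (f a) ∧ y = Sum.inr (Sum.inl (a, Fin.last n))) ∨
    (∃ a, x = Sum.inr (Sum.inr (g a)) ∧ y = Sum.inr (Sum.inl (a, 0)))

/-- Vertices of the double mapping cylinder `D_n`. -/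
def CylVert (f : VA → VB) (g : VA → VC) (n : ℕ) : Type :=
  Quot (cylRel f g n)

/-- Adjacency on the disjoint union `B ⊔ (A × I_n) ⊔ C`. -/
def cylBaseAdj (A : LoopGraph VA) (B : LoopGraph VB) (C : LoopGraph VC) (n : ℕ) :
    (VB ⊕ (VA × Fin (n + 1)) ⊕ VC) → (VB ⊕ (VA × Fin (n + 1)) ⊕ VC) → Prop
  | Sum.inl b, Sum.inl b' => B.Adj b b'
  | Sum.inr (Sum.inl p), Sum.inr (Sum.inl q) => (A.prodIn n).Adj p q
  | Sum.inr (Sum.inr c), Sum.inr (Sum.inr c') => C.Adj c c'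
  | _, _ => False

/-- The double mapping cylinder `D_n = B ⊔_f (A × I_n) ⊔_g C` of `f : A → B`, `g : A → C`. -/
def cylGraph (A : LoopGraph VA) (B : LoopGraph VB) (C : LoopGraph VC)
    (f : VA → VB) (g : VA → VC) (n : ℕ) : LoopGraph (CylVert f g n) :=
  ⟨fun x y => ∃ x₀ y₀, Quot.mk _ x₀ = x ∧ Quot.mk _ y₀ = y ∧ cylBaseAdj A B C n x₀ y₀, by
    rintro x y ⟨x₀, y₀, hx, hy, h⟩
    refine ⟨y₀, x₀, hy, hx, ?_⟩
    rcases x₀ with b | p | c <;> rcases y₀ with b' | p' | c' <;>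
      simp only [cylBaseAdj] at h ⊢
    · exact B.symm h
    · exact (A.prodIn n).symm h
    · exact C.symm h⟩

/-- Generating relation for the pushout: `f a ∼ g a`. -/
def pushRel (f : VA → VB) (g : VA → VC) : (VB ⊕ VC) → (VB ⊕ VC) → Prop :=
  fun x y => ∃ a, x = Sum.inl (f a) ∧ y = Sum.inr (g a)

/-- Vertices of the pushout graph. -/
def PushVert (f : VA → VB) (g : VA → VC) : Type := Quot (pushRel f g)

def pushBaseAdj (B : LoopGraph VB) (C : LoopGraph VC) : (VB ⊕ VC) → (VB ⊕ VC) → Prop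
  | Sum.inl b, Sum.inl b' => B.Adj b b'
  | Sum.inr c, Sum.inr c' => C.Adj c c'
  | _, _ => False

/-- The pushout graph `G = B ⊔_A C` of `f : A → B`, `g : A → C`. -/
def pushGraph (B : LoopGraph VB) (C : LoopGraph VC) (f : VA → VB) (g : VA → VC) :
    LoopGraph (PushVert f g) :=
  ⟨fun x y => ∃ x₀ y₀, Quot.mk _ x₀ = x ∧ Quot.mk _ y₀ = y ∧ pushBaseAdj B C x₀ y₀, by
    rintro x y ⟨x₀, y₀, hx, hy, h⟩
    refine ⟨y₀, x₀, hy, hx, ?_⟩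
    rcases x₀ with b | c <;> rcases y₀ with b' | c' <;> simp only [pushBaseAdj] at h ⊢
    · exact B.symm h
    · exact C.symm h⟩

end Cyl

/-- `η` is a multihomomorphism `T → G` (a cell of the Hom complex `Hom(T, G)`). -/
def IsMultiHom {VT VG : Type} (T : LoopGraph VT) (G : LoopGraph VG) (η : VT → Set VG) : Prop :=
  (∀ t, (η t).Nonempty) ∧
    ∀ ⦃s t⦄, T.Adj s t → ∀ x ∈ η s, ∀ y ∈ η t, G.Adj x y

/-!
A vertex of `B` in `D_n` is adjacent only to vertices of `B` and, through the copy
`V(A) × {n}` of `f(V(A))`, to vertices of `V(A) × {n - 1}`. Since `T` has no isolated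
vertices, every `t` has a neighbour `s`, so every vertex of `η t` is adjacent to the
vertex of `B` that `η s` contains and therefore lies in `V(B) ∪ V(A) × {n - 1}`.
-/

section Cylinder

variable {VA VB VC : Type} {f : VA → VB} {g : VA → VC} {n : ℕ}

/-- Collapses the two end layers of `A × I_n` onto `B` and `C`; for `n ≥ 1` this picks a
representative of each vertex of `D_n`. -/
def cylCanon (f : VA → VB) (g : VA → VC) (n : ℕ) :
    (VB ⊕ (VA × Fin (n + 1)) ⊕ VC) → (VB ⊕ (VA × Fin (n + 1)) ⊕ VC)
  | Sum.inr (Sum.inl (a, i)) =>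
      if i = Fin.last n then Sum.inl (f a)
      else if i = 0 then Sum.inr (Sum.inr (g a))
      else Sum.inr (Sum.inl (a, i))
  | x => x

theorem cylCanon_eq_of_cylRel (hn : 1 ≤ n) {x y : VB ⊕ (VA × Fin (n + 1)) ⊕ VC}
    (h : cylRel f g n x y) : cylCanon f g n x = cylCanon f g n y := by
  rcases h with ⟨a, rfl, rfl⟩ | ⟨a, rfl, rfl⟩
  · simp [cylCanon]
  · have h0 : (0 : Fin (n + 1)) ≠ Fin.last n := by
      rw [Ne, Fin.ext_iff, Fin.val_zero, Fin.val_last]; omega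
    simp [cylCanon, h0]

theorem cylCanon_eq_of_mk_eq_mk (hn : 1 ≤ n) {x y : VB ⊕ (VA × Fin (n + 1)) ⊕ VC}
    (h : Quot.mk (cylRel f g n) x = Quot.mk _ y) : cylCanon f g n x = cylCanon f g n y := by
  have hrel := Quot.eq.mp h
  clear h
  induction hrel with
  | rel _ _ h => exact cylCanon_eq_of_cylRel hn h
  | refl => rfl
  | symm _ _ _ ih => exact ih.symm
  | trans _ _ _ _ _ ih₁ ih₂ => exact ih₁.trans ih₂

theorem eq_inl_or_eq_top_of_cylCanon_eq_inl {x : VB ⊕ (VA × Fin (n + 1)) ⊕ VC} {b : VB}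
    (h : cylCanon f g n x = Sum.inl b) :
    x = Sum.inl b ∨ ∃ a, x = Sum.inr (Sum.inl (a, Fin.last n)) := by
  rcases x with b' | ⟨⟨a, i⟩ | c⟩
  · exact Or.inl h
  · by_cases hi : i = Fin.last n
    · exact Or.inr ⟨a, by rw [hi]⟩
    · simp only [cylCanon, hi, if_false] at h
      split at h <;> simp at h
  · simp [cylCanon] at h

theorem mk_top_eq_mk_inl (a : VA) :
    Quot.mk (cylRel f g n) (Sum.inr (Sum.inl (a, Fin.last n))) = Quot.mk _ (Sum.inl (f a)) :=
  (Quot.sound (r := cylRel f g n) (Or.inl ⟨a, rfl, rfl⟩)).symm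

theorem cylGraph_adj_mk_inl {A : LoopGraph VA} {B : LoopGraph VB} {C : LoopGraph VC}
    (hn : 1 ≤ n) {x : CylVert f g n} {b : VB}
    (h : (cylGraph A B C f g n).Adj x (Quot.mk _ (Sum.inl b))) :
    (∃ b', x = Quot.mk _ (Sum.inl b')) ∨
      ∃ a, x = Quot.mk _ (Sum.inr (Sum.inl (a, ⟨n - 1, Nat.sub_lt_succ n 1⟩))) := by
  obtain ⟨x₀, y₀, rfl, hy, hadj⟩ := h
  rcases eq_inl_or_eq_top_of_cylCanon_eq_inl (cylCanon_eq_of_mk_eq_mk hn hy) with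
    rfl | ⟨a, rfl⟩
  · rcases x₀ with b' | _ | _ <;> simp only [cylBaseAdj] at hadj
    exact Or.inl ⟨b', rfl⟩
  · rcases x₀ with _ | ⟨a', j⟩ | _ <;> simp only [cylBaseAdj] at hadj
    obtain ⟨-, hj⟩ := hadj
    simp only [Fin.val_last, abs_le] at hj
    by_cases hjn : (j : ℕ) = n
    · obtain rfl : j = Fin.last n := Fin.ext hjn
      exact Or.inl ⟨f a', mk_top_eq_mk_inl a'⟩
    · have hj' : j = ⟨n - 1, Nat.sub_lt_succ n 1⟩ := Fin.ext (by simp only; omega)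
      exact Or.inr ⟨a', by rw [hj']⟩

theorem mem_compl_range_union_range_iff {x : CylVert f g n} :
    x ∈ {x | ∃ b, b ∉ Set.range f ∧ x = Quot.mk _ (Sum.inl b)} ∪
        {x | ∃ a, x = Quot.mk _ (Sum.inl (f a))} ↔
      ∃ b, x = Quot.mk _ (Sum.inl b) := by
  constructor
  · rintro (⟨b, -, rfl⟩ | ⟨a, rfl⟩) <;> exact ⟨_, rfl⟩
  · rintro ⟨b, rfl⟩
    by_cases hb : b ∈ Set.range f
    · obtain ⟨a, rfl⟩ := hb
      exact Or.inr ⟨a, rfl⟩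
    · exact Or.inl ⟨b, hb, rfl⟩

end Cylinder

/-- Let `T` have no isolated vertices and let `η` be a cell of
`Hom(T, D_n)`.  Writing `X = V(B) − f(V(A))`, `Y = f(V(A))` (identified with
`V(A) × {n}`) and `Z = V(A) × {n−1}`: if `η t` meets `X ∪ Y` for every vertex `t` of
`T`, then `Im η ⊆ X ∪ Y ∪ Z`, i.e. `Im η ⊆ V(B) ∪ (V(A) × {n−1})`. -/
theorem cell_image_in_top_collar {VT VA VB VC : Type}
    (T : LoopGraph VT) (A : LoopGraph VA) (B : LoopGraph VB) (C : LoopGraph VC)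
    (f : GHom A B) (g : GHom A C) (n : ℕ) (hn : 1 ≤ n)
    (hT : ∀ t, ∃ s, T.Adj t s)
    (η : VT → Set (CylVert f.toFun g.toFun n))
    (hη : IsMultiHom T (cylGraph A B C f.toFun g.toFun n) η)
    (X : Set (CylVert f.toFun g.toFun n))
    (hX : X = {x | ∃ b, b ∉ Set.range f.toFun ∧ x = Quot.mk _ (Sum.inl b)})
    (Y : Set (CylVert f.toFun g.toFun n))
    (hY : Y = {x | ∃ a, x = Quot.mk _ (Sum.inl (f.toFun a))})
    (Z : Set (CylVert f.toFun g.toFun n))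
    (hZ : Z = {x | ∃ a, x = Quot.mk _ (Sum.inr (Sum.inl (a, ⟨n - 1, by omega⟩)))})
    (hmeets : ∀ t, (η t ∩ (X ∪ Y)).Nonempty) :
    ∀ t, η t ⊆ X ∪ Y ∪ Z := by
  subst hX hY hZ
  intro t v hv
  obtain ⟨s, hts⟩ := hT t
  obtain ⟨w, hws, hw⟩ := hmeets s
  obtain ⟨b, rfl⟩ := mem_compl_range_union_range_iff.mp hw
  rcases cylGraph_adj_mk_inl hn (hη.2 hts v hv _ hws) with hB | hZ
  · exact Or.inl (mem_compl_range_union_range_iff.mpr hB)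
  · exact Or.inr hZ
end

section
/- Let T be a finite connected graph such that the path P_4 on four vertices (three edges) is not an induced subgraph of T, and let D_n be a double mapping cylinder with n ≥ diam(T) + 1. Then every maximal cell η of Hom(T, D_n) has a pure face, i.e., a nonempty face contained in one of the subcomplexes Hom(T, B), Hom(T, A × I_n), or Hom(T, C). -/
/-- A simple graph, viewed as a `Graph`. -/
def ofSimple {V : Type} (G : SimpleGraph V) : LoopGraph V := ⟨G.Adj, fun h => G.adj_symm h⟩

section MultiHom
variable {VT VG : Type} {T : LoopGraph VT} {G : LoopGraph VG} {η : VT → Set VG}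

lemma IsMultiHom.exists_face_subset {S : Set VG} (hη : IsMultiHom T G η)
    (hS : ∀ t, (η t ∩ S).Nonempty) :
    ∃ η', IsMultiHom T G η' ∧ (∀ t, η' t ⊆ η t) ∧ ∀ t, η' t ⊆ S :=
  ⟨fun t => η t ∩ S, ⟨hS, fun _ _ hst x hx y hy => hη.2 hst x hx.1 y hy.1⟩,
    fun _ => Set.inter_subset_left, fun _ => Set.inter_subset_right⟩

def IsMaximalMultiHom (T : LoopGraph VT) (G : LoopGraph VG) (η : VT → Set VG) : Prop :=
  IsMultiHom T G η ∧ ∀ η', IsMultiHom T G η' → (∀ t, η t ⊆ η' t) → η' = η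

lemma IsMaximalMultiHom.mem_of_forall_adj (hη : IsMaximalMultiHom T G η) {t : VT}
    (ht : ¬ T.Adj t t) {x : VG} (hx : ∀ s, T.Adj s t → ∀ w ∈ η s, G.Adj w x) : x ∈ η t := by
  let η' : VT → Set VG := fun u => {y | y ∈ η u ∨ (u = t ∧ y = x)}
  have hη' : IsMultiHom T G η' := by
    refine ⟨fun u => (hη.1.1 u).mono fun y hy => Or.inl hy, ?_⟩
    rintro s u hsu y (hy | ⟨rfl, rfl⟩) z (hz | ⟨rfl, rfl⟩)
    · exact hη.1.2 hsu y hy z hz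
    · exact hx s hsu y hy
    · exact G.symm (hx u (T.symm hsu) z hz)
    · exact (ht hsu).elim
  have hxt : x ∈ η' t := Or.inr ⟨rfl, rfl⟩
  rwa [hη.2 η' hη' fun u y hy => Or.inl hy] at hxt

end MultiHom

namespace SimpleGraph
variable {V : Type} {T : SimpleGraph V}

lemma pathGraph_four_isIndContained {a b c d : V} (hab : T.Adj a b) (hbc : T.Adj b c)
    (hcd : T.Adj c d) (hac : ¬ T.Adj a c) (hbd : ¬ T.Adj b d) (had : ¬ T.Adj a d) :
    pathGraph 4 ⊴ T := by
  have hca : ¬ T.Adj c a := fun h => hac h.symm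
  have hdb : ¬ T.Adj d b := fun h => hbd h.symm
  have hda : ¬ T.Adj d a := fun h => had h.symm
  let e : Fin 4 → V := ![a, b, c, d]
  have hadj : ∀ i j, T.Adj (e i) (e j) ↔ (pathGraph 4).Adj i j := by
    intro i j
    fin_cases i <;> fin_cases j <;>
      simp [e, pathGraph_adj, hab, hbc, hcd, hac, hbd, had, hab.symm, hbc.symm, hcd.symm,
        hca, hdb, hda]
  -- no two vertices of `P₄` have the same neighbourhood
  have hinj : Function.Injective e := fun i j hij => by
    have key : ∀ i j : Fin 4, (∀ k : Fin 4, (i.val + 1 = k.val ∨ k.val + 1 = i.val) ↔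
        (j.val + 1 = k.val ∨ k.val + 1 = j.val)) → i = j := by
      decide
    exact key i j fun k => by
      rw [← pathGraph_adj (n := 4), ← pathGraph_adj (n := 4), ← hadj, ← hadj, hij]
  exact ⟨⟨⟨e, hinj⟩, hadj _ _⟩⟩

lemma Reachable.eq_or_adj_or_exists_adj_adj (hP4 : ¬ pathGraph 4 ⊴ T) {s t : V}
    (h : T.Reachable s t) : s = t ∨ T.Adj s t ∨ ∃ u, T.Adj s u ∧ T.Adj u t := by
  obtain ⟨p⟩ := h
  induction p with
  | nil => exact Or.inl rfl
  | @cons s a t hsa _ ih =>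
    refine Or.inr (or_iff_not_imp_left.2 fun hst => ?_)
    rcases ih with rfl | hat | ⟨u, hau, hut⟩
    · exact (hst hsa).elim
    · exact ⟨a, hsa, hat⟩
    · by_cases hsu : T.Adj s u
      · exact ⟨u, hsu, hut⟩
      by_cases hat : T.Adj a t
      · exact ⟨a, hsa, hat⟩
      exact (hP4 (pathGraph_four_isIndContained hsa hau hut hsu hat hst)).elim

lemma Connected.adj_or_exists_adj_adj [Nontrivial V] (hT : T.Connected)
    (hP4 : ¬ pathGraph 4 ⊴ T) (s t : V) : T.Adj s t ∨ ∃ u, T.Adj s u ∧ T.Adj u t := by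
  rcases (hT.preconnected s t).eq_or_adj_or_exists_adj_adj hP4 with rfl | h | h
  · obtain ⟨u, hu⟩ := hT.preconnected.exists_adj_of_nontrivial s
    exact Or.inr ⟨u, hu, hu.symm⟩
  · exact Or.inl h
  · exact Or.inr h

lemma ediam_le_two_of_adj_or_exists_adj_adj
    (h : ∀ s t : V, T.Adj s t ∨ ∃ u, T.Adj s u ∧ T.Adj u t) : T.ediam ≤ 2 :=
  ediam_le_of_edist_le fun s t => by
    rcases h s t with h | ⟨u, hsu, hut⟩
    · exact (edist_le h.toWalk).trans (by simp)
    · simpa using edist_le (.cons hsu (.cons hut .nil))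

end SimpleGraph

section Cylinder
variable {VA VB VC : Type} {A : LoopGraph VA} {B : LoopGraph VB} {C : LoopGraph VC}
  {f : VA → VB} {g : VA → VC} {n : ℕ}

variable (f g n) in
def cylB : Set (CylVert f g n) := Set.range fun b => Quot.mk _ (Sum.inl b)

variable (f g n) in
def cylMid : Set (CylVert f g n) :=
  Set.range fun p : VA × Fin (n + 1) => Quot.mk _ (Sum.inr (Sum.inl p))

variable (f g n) in
def cylC : Set (CylVert f g n) := Set.range fun c => Quot.mk _ (Sum.inr (Sum.inr c))

lemma mem_cylB_or_mem_cylMid_or_mem_cylC (x : CylVert f g n) :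
    x ∈ cylB f g n ∨ x ∈ cylMid f g n ∨ x ∈ cylC f g n := by
  obtain ⟨b | p | c, rfl⟩ := Quot.exists_rep x
  exacts [Or.inl ⟨b, rfl⟩, Or.inr (Or.inl ⟨p, rfl⟩), Or.inr (Or.inr ⟨c, rfl⟩)]

lemma mk_inl_eq_mk_last (a : VA) :
    Quot.mk (cylRel f g n) (Sum.inl (f a)) = Quot.mk _ (Sum.inr (Sum.inl (a, Fin.last n))) :=
  Quot.sound (Or.inl ⟨a, rfl, rfl⟩)

lemma mk_inr_inr_eq_mk_zero (a : VA) :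
    Quot.mk (cylRel f g n) (Sum.inr (Sum.inr (g a))) = Quot.mk _ (Sum.inr (Sum.inl (a, 0))) :=
  Quot.sound (Or.inr ⟨a, rfl, rfl⟩)

lemma eq_of_mk_eq_mk_mid {a : VA} {j : Fin (n + 1)} (h0 : j ≠ 0) (hn : j ≠ Fin.last n)
    {y : VB ⊕ (VA × Fin (n + 1)) ⊕ VC}
    (h : Quot.mk (cylRel f g n) y = Quot.mk _ (Sum.inr (Sum.inl (a, j)))) :
    y = Sum.inr (Sum.inl (a, j)) := by
  have key : ∀ x y, Relation.EqvGen (cylRel f g n) x y →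
      (x = Sum.inr (Sum.inl (a, j)) ↔ y = Sum.inr (Sum.inl (a, j))) := by
    intro x y hxy
    induction hxy with
    | rel x y hxy =>
      rcases hxy with ⟨a', rfl, rfl⟩ | ⟨a', rfl, rfl⟩ <;> simp [Ne.symm h0, Ne.symm hn]
    | refl => rfl
    | symm _ _ _ ih => exact ih.symm
    | trans _ _ _ _ _ ih₁ ih₂ => exact ih₁.trans ih₂
  exact (key _ _ (Quot.eqvGen_exact h)).2 rfl

lemma exists_mk_mid_of_adj_mk_mid {a : VA} {j : Fin (n + 1)} (h0 : j ≠ 0)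
    (hn : j ≠ Fin.last n) {w : CylVert f g n}
    (h : (cylGraph A B C f g n).Adj w (Quot.mk _ (Sum.inr (Sum.inl (a, j))))) :
    ∃ a' j', Quot.mk _ (Sum.inr (Sum.inl (a', j'))) = w ∧ A.Adj a' a ∧ |(j' : ℤ) - j| ≤ 1 := by
  obtain ⟨x₀, y₀, rfl, hy, hadj⟩ := h
  obtain rfl := eq_of_mk_eq_mk_mid h0 hn hy
  rcases x₀ with b | ⟨a', j'⟩ | c
  · exact hadj.elim
  · exact ⟨a', j', rfl, hadj⟩
  · exact hadj.elim

open Classical in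
variable (f g n) in
noncomputable def cylHeightBase : VB ⊕ (VA × Fin (n + 1)) ⊕ VC → ℤ
  | .inl b => if b ∈ Set.range f then n else n + 1
  | .inr (.inl p) => p.2
  | .inr (.inr c) => if c ∈ Set.range g then 0 else -1

noncomputable def cylHeight : CylVert f g n → ℤ :=
  Quot.lift (cylHeightBase f g n) <| by
    rintro _ _ (⟨a, rfl, rfl⟩ | ⟨a, rfl, rfl⟩) <;> simp [cylHeightBase]

lemma abs_cylHeight_sub_le_one {x y : CylVert f g n} (h : (cylGraph A B C f g n).Adj x y) :
    |cylHeight x - cylHeight y| ≤ 1 := by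
  obtain ⟨x₀, y₀, rfl, rfl, h⟩ := h
  rcases x₀ with b | p | c <;> rcases y₀ with b' | p' | c' <;> simp only [cylBaseAdj] at h
  · simp only [cylHeight, cylHeightBase]
    split_ifs <;> simp
  · exact h.2
  · simp only [cylHeight, cylHeightBase]
    split_ifs <;> simp

@[simp]
lemma cylHeight_mk_mid (p : VA × Fin (n + 1)) :
    cylHeight (Quot.mk (cylRel f g n) (Sum.inr (Sum.inl p))) = p.2 :=
  rfl

lemma mem_cylMid_of_cylHeight {x : CylVert f g n} (h0 : 0 ≤ cylHeight x) (hn : cylHeight x ≤ n) :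
    x ∈ cylMid f g n := by
  obtain ⟨b | p | c, rfl⟩ := Quot.exists_rep x
  · simp only [cylHeight, cylHeightBase] at hn
    split_ifs at hn with hb
    · obtain ⟨a, rfl⟩ := hb
      exact ⟨(a, Fin.last n), (mk_inl_eq_mk_last a).symm⟩
    · omega
  · exact ⟨p, rfl⟩
  · simp only [cylHeight, cylHeightBase] at h0
    split_ifs at h0 with hc
    · obtain ⟨a, rfl⟩ := hc
      exact ⟨(a, 0), (mk_inr_inr_eq_mk_zero a).symm⟩
    · omega

lemma mem_cylB_of_le_cylHeight (hn : 1 ≤ n) {x : CylVert f g n} (h : n ≤ cylHeight x) :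
    x ∈ cylB f g n := by
  obtain ⟨b | ⟨a, j⟩ | c, rfl⟩ := Quot.exists_rep x
  · exact ⟨b, rfl⟩
  · have hj : j = Fin.last n := by
      simp only [cylHeight, cylHeightBase] at h
      exact Fin.ext (by rw [Fin.val_last]; omega)
    exact ⟨f a, hj ▸ mk_inl_eq_mk_last a⟩
  · simp only [cylHeight, cylHeightBase] at h
    split_ifs at h <;> omega

lemma mem_cylC_of_cylHeight_nonpos (hn : 1 ≤ n) {x : CylVert f g n} (h : cylHeight x ≤ 0) :
    x ∈ cylC f g n := by
  obtain ⟨b | ⟨a, j⟩ | c, rfl⟩ := Quot.exists_rep x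
  · simp only [cylHeight, cylHeightBase] at h
    split_ifs at h <;> omega
  · have hj : j = 0 := by
      simp only [cylHeight, cylHeightBase] at h
      exact Fin.ext (by rw [Fin.val_zero]; omega)
    exact ⟨g a, hj ▸ mk_inr_inr_eq_mk_zero a⟩
  · exact ⟨c, rfl⟩

end Cylinder

section MaximalCell
variable {VT VA VB VC : Type} {T : SimpleGraph VT} {A : LoopGraph VA} {B : LoopGraph VB}
  {C : LoopGraph VC} {f : VA → VB} {g : VA → VC} {n : ℕ} {η : VT → Set (CylVert f g n)}

lemma IsMaximalMultiHom.mk_mid_mem_of_mk_mid_mem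
    (hη : IsMaximalMultiHom (ofSimple T) (cylGraph A B C f g n) η) {t : VT} {a : VA}
    {j : Fin (n + 1)} (h0 : j ≠ 0) (hn : j ≠ Fin.last n)
    (hj : Quot.mk _ (Sum.inr (Sum.inl (a, j))) ∈ η t) (k : Fin (n + 1))
    (hk : ∀ s, T.Adj s t → ∀ w ∈ η s, |cylHeight w - k| ≤ 1) :
    Quot.mk _ (Sum.inr (Sum.inl (a, k))) ∈ η t := by
  refine hη.mem_of_forall_adj (T.irrefl (v := t)) fun s hst w hw => ?_
  obtain ⟨a', j', rfl, haa, -⟩ := exists_mk_mid_of_adj_mk_mid h0 hn (hη.1.2 hst w hw _ hj)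
  exact ⟨_, _, rfl, rfl, haa, hk s hst _ hw⟩

lemma IsMaximalMultiHom.inter_cylB_nonempty
    (hη : IsMaximalMultiHom (ofSimple T) (cylGraph A B C f g n) η) (hn : 2 ≤ n)
    (hlow : ∀ s, ∀ w ∈ η s, (n : ℤ) - 1 ≤ cylHeight w) (t : VT) :
    (η t ∩ cylB f g n).Nonempty := by
  by_contra hmiss
  have hlt : ∀ z ∈ η t, cylHeight z < n := fun z hz =>
    lt_of_not_ge fun h => hmiss ⟨z, hz, mem_cylB_of_le_cylHeight (by omega) h⟩
  obtain ⟨z, hz⟩ := hη.1.1 t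
  obtain ⟨⟨a, j⟩, rfl⟩ :=
    mem_cylMid_of_cylHeight (by linarith [hlow t z hz]) (hlt z hz).le
  have hj₁ : (n : ℤ) - 1 ≤ j := hlow t _ hz
  have hj₂ : (j : ℤ) < n := hlt _ hz
  have hlast : Quot.mk _ (Sum.inr (Sum.inl (a, Fin.last n))) ∈ η t := by
    refine hη.mk_mid_mem_of_mk_mid_mem (Fin.ne_of_val_ne (by rw [Fin.val_zero]; omega))
      (Fin.ne_of_val_ne (by rw [Fin.val_last]; omega)) hz _ fun s hst w hw => ?_
    have hwz := abs_le.1 (abs_cylHeight_sub_le_one (hη.1.2 hst w hw _ hz))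
    simp only [cylHeight_mk_mid] at hwz
    rw [Fin.val_last, abs_le]
    constructor <;> linarith [hlow s w hw, hwz.2, hj₂]
  exact hmiss ⟨_, hlast, f a, mk_inl_eq_mk_last a⟩

lemma IsMaximalMultiHom.inter_cylC_nonempty
    (hη : IsMaximalMultiHom (ofSimple T) (cylGraph A B C f g n) η) (hn : 2 ≤ n)
    (hhigh : ∀ s, ∀ w ∈ η s, cylHeight w ≤ 1) (t : VT) :
    (η t ∩ cylC f g n).Nonempty := by
  by_contra hmiss
  have hpos : ∀ z ∈ η t, 0 < cylHeight z := fun z hz =>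
    lt_of_not_ge fun h => hmiss ⟨z, hz, mem_cylC_of_cylHeight_nonpos (by omega) h⟩
  obtain ⟨z, hz⟩ := hη.1.1 t
  obtain ⟨⟨a, j⟩, rfl⟩ :=
    mem_cylMid_of_cylHeight (hpos z hz).le (by linarith [hhigh t z hz])
  have hj₁ : 0 < (j : ℤ) := hpos _ hz
  have hj₂ : (j : ℤ) ≤ 1 := hhigh t _ hz
  have hzero : Quot.mk _ (Sum.inr (Sum.inl (a, 0))) ∈ η t := by
    refine hη.mk_mid_mem_of_mk_mid_mem (Fin.ne_of_val_ne (by rw [Fin.val_zero]; omega))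
      (Fin.ne_of_val_ne (by rw [Fin.val_last]; omega)) hz _ fun s hst w hw => ?_
    have hwz := abs_le.1 (abs_cylHeight_sub_le_one (hη.1.2 hst w hw _ hz))
    simp only [cylHeight_mk_mid] at hwz
    rw [Fin.val_zero, Nat.cast_zero, abs_le]
    constructor <;> linarith [hhigh s w hw, hwz.1, hj₁]
  exact hmiss ⟨_, hzero, g a, mk_inr_inr_eq_mk_zero a⟩

lemma IsMultiHom.abs_cylHeight_sub_le_two
    (hη : IsMultiHom (ofSimple T) (cylGraph A B C f g n) η)
    (hT : ∀ s t, T.Adj s t ∨ ∃ u, T.Adj s u ∧ T.Adj u t) {s t : VT} {x y : CylVert f g n}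
    (hx : x ∈ η s) (hy : y ∈ η t) : |cylHeight x - cylHeight y| ≤ 2 := by
  rcases hT s t with hst | ⟨u, hsu, hut⟩
  · linarith [abs_cylHeight_sub_le_one (hη.2 hst x hx y hy)]
  · obtain ⟨w, hw⟩ := hη.1 u
    calc |cylHeight x - cylHeight y|
        ≤ |cylHeight x - cylHeight w| + |cylHeight w - cylHeight y| := abs_sub_le _ _ _
      _ ≤ 1 + 1 := add_le_add (abs_cylHeight_sub_le_one (hη.2 hsu x hx w hw))
          (abs_cylHeight_sub_le_one (hη.2 hut w hw y hy))
      _ = 2 := by norm_num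

lemma IsMaximalMultiHom.inter_cylB_or_inter_cylMid_or_inter_cylC_nonempty
    (hη : IsMaximalMultiHom (ofSimple T) (cylGraph A B C f g n) η) (hn : 2 ≤ n)
    (hT : ∀ s t, T.Adj s t ∨ ∃ u, T.Adj s u ∧ T.Adj u t) :
    (∀ t, (η t ∩ cylB f g n).Nonempty) ∨ (∀ t, (η t ∩ cylMid f g n).Nonempty) ∨
      (∀ t, (η t ∩ cylC f g n).Nonempty) := by
  by_cases hhigh : ∃ s, ∃ x ∈ η s, (n : ℤ) + 1 ≤ cylHeight x
  · obtain ⟨s, x, hx, hxh⟩ := hhigh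
    exact Or.inl <| hη.inter_cylB_nonempty hn fun t w hw => by
      linarith [(abs_le.1 (hη.1.abs_cylHeight_sub_le_two hT hw hx)).1]
  by_cases hlow : ∃ s, ∃ x ∈ η s, cylHeight x ≤ -1
  · obtain ⟨s, x, hx, hxl⟩ := hlow
    exact Or.inr <| Or.inr <| hη.inter_cylC_nonempty hn fun t w hw => by
      linarith [(abs_le.1 (hη.1.abs_cylHeight_sub_le_two hT hw hx)).2]
  simp only [not_exists, not_and, not_le] at hhigh hlow
  refine Or.inr <| Or.inl fun t => ?_
  obtain ⟨x, hx⟩ := hη.1.1 t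
  exact ⟨x, hx, mem_cylMid_of_cylHeight (by linarith [hlow t x hx]) (by linarith [hhigh t x hx])⟩

end MaximalCell

theorem maximal_cell_has_pure_face_general {VT VA VB VC : Type}
    (T : SimpleGraph VT) (hTconn : T.Connected)
    (hP4 : ¬ ∃ e : Fin 4 ↪ VT, ∀ i j, T.Adj (e i) (e j) ↔ (SimpleGraph.pathGraph 4).Adj i j)
    (A : LoopGraph VA) (B : LoopGraph VB) (C : LoopGraph VC)
    (f : GHom A B) (g : GHom A C) (n : ℕ) (hn : T.diam + 1 ≤ n)
    (η : VT → Set (CylVert f.toFun g.toFun n))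
    (hη : IsMultiHom (ofSimple T) (cylGraph A B C f.toFun g.toFun n) η)
    (hmax : ∀ η', IsMultiHom (ofSimple T) (cylGraph A B C f.toFun g.toFun n) η' →
      (∀ t, η t ⊆ η' t) → η' = η) :
    ∃ η', IsMultiHom (ofSimple T) (cylGraph A B C f.toFun g.toFun n) η' ∧
      (∀ t, η' t ⊆ η t) ∧
      ((∀ t, η' t ⊆ Set.range fun b => Quot.mk _ (Sum.inl b)) ∨
       (∀ t, η' t ⊆ Set.range fun p : VA × Fin (n + 1) =>
          Quot.mk _ (Sum.inr (Sum.inl p))) ∨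
       (∀ t, η' t ⊆ Set.range fun c => Quot.mk _ (Sum.inr (Sum.inr c)))) := by
  suffices h : (∀ t, (η t ∩ cylB f.toFun g.toFun n).Nonempty) ∨
      (∀ t, (η t ∩ cylMid f.toFun g.toFun n).Nonempty) ∨
      (∀ t, (η t ∩ cylC f.toFun g.toFun n).Nonempty) by
    rcases h with h | h | h <;> obtain ⟨η', hη', hsub, hpure⟩ := hη.exists_face_subset h
    exacts [⟨η', hη', hsub, Or.inl hpure⟩, ⟨η', hη', hsub, Or.inr (Or.inl hpure)⟩,
      ⟨η', hη', hsub, Or.inr (Or.inr hpure)⟩]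
  obtain hVT | hVT := subsingleton_or_nontrivial VT
  · obtain ⟨t₀⟩ := hTconn.nonempty
    obtain ⟨x, hx⟩ := hη.1 t₀
    have hall : ∀ S, x ∈ S → ∀ t, (η t ∩ S).Nonempty := fun S hS t =>
      ⟨x, Subsingleton.elim t₀ t ▸ hx, hS⟩
    rcases mem_cylB_or_mem_cylMid_or_mem_cylC x with h | h | h
    exacts [Or.inl (hall _ h), Or.inr (Or.inl (hall _ h)), Or.inr (Or.inr (hall _ h))]
  have hT := hTconn.adj_or_exists_adj_adj fun ⟨e⟩ => hP4 ⟨e.toEmbedding, fun _ _ => e.map_rel_iff⟩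
  have hdiam : T.diam ≠ 0 :=
    T.diam_ne_zero_of_ediam_ne_top (ne_top_of_le_ne_top (by decide)
      (SimpleGraph.ediam_le_two_of_adj_or_exists_adj_adj hT))
  exact IsMaximalMultiHom.inter_cylB_or_inter_cylMid_or_inter_cylC_nonempty ⟨hη, hmax⟩
    (by omega) hT

/-- Let `T` be a finite connected graph with no induced `P₄` and let
`D_n` be a double mapping cylinder with `n ≥ diam(T) + 1`.  Then every maximal cell `η`
of `Hom(T, D_n)` has a pure face: a cell `η' ≤ η` whose image lies entirely in `V(B)`,
in `V(A × I_n)`, or in `V(C)` (under the cylinder identifications). -/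
theorem maximal_cell_has_pure_face {VT VA VB VC : Type}
    [Fintype VT] [Fintype VA] [Fintype VB] [Fintype VC]
    (T : SimpleGraph VT) (hTconn : T.Connected)
    (hP4 : ¬ ∃ e : Fin 4 ↪ VT, ∀ i j, T.Adj (e i) (e j) ↔ (SimpleGraph.pathGraph 4).Adj i j)
    (A : LoopGraph VA) (B : LoopGraph VB) (C : LoopGraph VC)
    (f : GHom A B) (g : GHom A C) (n : ℕ) (hn : T.diam + 1 ≤ n)
    (η : VT → Set (CylVert f.toFun g.toFun n))
    (hη : IsMultiHom (ofSimple T) (cylGraph A B C f.toFun g.toFun n) η)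
    (hmax : ∀ η', IsMultiHom (ofSimple T) (cylGraph A B C f.toFun g.toFun n) η' →
      (∀ t, η t ⊆ η' t) → η' = η) :
    ∃ η', IsMultiHom (ofSimple T) (cylGraph A B C f.toFun g.toFun n) η' ∧
      (∀ t, η' t ⊆ η t) ∧
      ((∀ t, η' t ⊆ Set.range fun b => Quot.mk _ (Sum.inl b)) ∨
       (∀ t, η' t ⊆ Set.range fun p : VA × Fin (n + 1) =>
          Quot.mk _ (Sum.inr (Sum.inl p))) ∨
       (∀ t, η' t ⊆ Set.range fun c => Quot.mk _ (Sum.inr (Sum.inr c)))) :=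
  maximal_cell_has_pure_face_general T hTconn hP4 A B C f g n hn η hη hmax
end
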